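/- For binary strings a = (a_1,...,a_n) and b = (a_1,...,a_{i-1}, ā_i, a_{i+1},...,a_n) differing in exactly position i, their encodings u, v under the map f satisfy u_j = v_j for j < i and v_j = u_j^c for j ≥ i; hence d_H(u,v) = ℓ(n − i + 1). -/
import Mathlib


/-- Watson–Crick complement on `{A,C,G,T} = {0,1,2,3}`: swaps `0↔3`, `1↔2`. -/
def dnaCompl (x : Fin 4) : Fin 4 := 3 - x

/-- Coordinatewise complement of a DNA block of length `ℓ`. -/
def blkCompl {ℓ : ℕ} (z : Fin ℓ → Fin 4) : Fin ℓ → Fin 4 := fun i => dnaCompl (z i)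

/-- The map `f` of the recursive encoding: `f(x,0)=y`, `f(x,1)=y^c`,
`f(x^c,0)=y^c`, `f(x^c,1)=y`, `f(y,0)=x^c`, `f(y,1)=x`, `f(y^c,0)=x`,
`f(y^c,1)=x^c`. -/
def fmap {ℓ : ℕ} (x y z : Fin ℓ → Fin 4) (c : Bool) : Fin ℓ → Fin 4 :=
  if z = x then (if c then blkCompl y else y)
  else if z = blkCompl x then (if c then y else blkCompl y)
  else if z = y then (if c then x else blkCompl x)
  else (if c then blkCompl x else x)

/-- The recursive block encoding of a binary string: `u 0 = h(a_1)` with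
`h(0) = x`, `h(1) = x^c`, and `u (i+1) = f(u i, a_{i+1})`. -/
def enc {ℓ : ℕ} (x y : Fin ℓ → Fin 4) (a : ℕ → Bool) : ℕ → (Fin ℓ → Fin 4)
  | 0 => if a 0 then blkCompl x else x
  | i + 1 => fmap x y (enc x y a i) (a (i + 1))

lemma dnaCompl_ne (v : Fin 4) : dnaCompl v ≠ v := by fin_cases v <;> decide

lemma dnaCompl_invol (v : Fin 4) : dnaCompl (dnaCompl v) = v := by fin_cases v <;> decide

lemma blkCompl_invol {ℓ : ℕ} (z : Fin ℓ → Fin 4) : blkCompl (blkCompl z) = z :=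
  funext fun i => dnaCompl_invol (z i)

lemma blkCompl_ne {ℓ : ℕ} (hℓ : 0 < ℓ) (z : Fin ℓ → Fin 4) : blkCompl z ≠ z :=
  fun h => dnaCompl_ne (z ⟨0, hℓ⟩) (congrFun h ⟨0, hℓ⟩)

lemma blkCompl_inj {ℓ : ℕ} {z w : Fin ℓ → Fin 4} (h : blkCompl z = blkCompl w) : z = w := by
  have := congrArg blkCompl h
  rwa [blkCompl_invol, blkCompl_invol] at this

lemma hamming_compl {ℓ : ℕ} (z : Fin ℓ → Fin 4) : hammingDist z (blkCompl z) = ℓ := by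
  unfold hammingDist blkCompl
  rw [Finset.filter_true_of_mem (fun i _ => (dnaCompl_ne (z i)).symm)]
  simp

section facts
variable {ℓ : ℕ} (hℓ : 0 < ℓ) (x y : Fin ℓ → Fin 4)
  (hxy : x ≠ y) (hxyc : x ≠ blkCompl y)

include hℓ hxy hxyc

lemma fmap_x (c : Bool) : fmap x y x c = if c then blkCompl y else y := by
  simp [fmap]

lemma fmap_xc (c : Bool) : fmap x y (blkCompl x) c = if c then y else blkCompl y := by
  simp [fmap, blkCompl_ne hℓ x]

lemma fmap_y (c : Bool) : fmap x y y c = if c then x else blkCompl x := by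
  have h1 : y ≠ x := Ne.symm hxy
  have h2 : y ≠ blkCompl x := fun h => hxyc (by rw [h, blkCompl_invol])
  simp [fmap, h1, h2]

lemma fmap_yc (c : Bool) : fmap x y (blkCompl y) c = if c then blkCompl x else x := by
  have h1 : blkCompl y ≠ x := Ne.symm hxyc
  have h2 : blkCompl y ≠ blkCompl x := fun h => hxy (blkCompl_inj h.symm)
  have h3 : blkCompl y ≠ y := blkCompl_ne hℓ y
  simp [fmap, h1, h2, h3]

lemma enc_mem (a : ℕ → Bool) (j : ℕ) :
    enc x y a j = x ∨ enc x y a j = blkCompl x ∨ enc x y a j = y ∨ enc x y a j = blkCompl y := by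
  induction j with
  | zero => by_cases h : a 0 <;> simp [enc, h]
  | succ k ih =>
    rcases ih with h | h | h | h <;>
      simp only [enc, h, fmap_x hℓ x y hxy hxyc, fmap_xc hℓ x y hxy hxyc,
        fmap_y hℓ x y hxy hxyc, fmap_yc hℓ x y hxy hxyc] <;>
      by_cases hc : a (k + 1) <;> simp [hc]

lemma fmap_not (z : Fin ℓ → Fin 4)
    (hz : z = x ∨ z = blkCompl x ∨ z = y ∨ z = blkCompl y) (c : Bool) :
    fmap x y z (!c) = blkCompl (fmap x y z c) := by
  rcases hz with h | h | h | h <;> rw [h] <;>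
    simp only [fmap_x hℓ x y hxy hxyc, fmap_xc hℓ x y hxy hxyc,
      fmap_y hℓ x y hxy hxyc, fmap_yc hℓ x y hxy hxyc] <;>
    cases c <;> simp [blkCompl_invol]

lemma fmap_compl (z : Fin ℓ → Fin 4)
    (hz : z = x ∨ z = blkCompl x ∨ z = y ∨ z = blkCompl y) (c : Bool) :
    fmap x y (blkCompl z) c = blkCompl (fmap x y z c) := by
  rcases hz with h | h | h | h <;> rw [h] <;>
    simp only [blkCompl_invol, fmap_x hℓ x y hxy hxyc, fmap_xc hℓ x y hxy hxyc,
      fmap_y hℓ x y hxy hxyc, fmap_yc hℓ x y hxy hxyc] <;>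
    cases c <;> simp [blkCompl_invol]

end facts

/-- If binary strings `a` and `b` differ exactly in position `i` (0-indexed,
`i < n`), then their block encodings `u`, `v` satisfy `v_j = u_j` for `j < i`
and `v_j = u_j^c` for `j ≥ i`; hence the Hamming distance of the concatenated
DNA strings equals `ℓ·(n − i)`. -/
theorem enc_single_flip {ℓ n : ℕ} (hℓ : 0 < ℓ) (x y : Fin ℓ → Fin 4)
    (hxy : x ≠ y) (hxyc : x ≠ blkCompl y)
    (a b : ℕ → Bool) (i : ℕ) (hi : i < n)
    (hflip : b i = !(a i)) (hsame : ∀ j, j ≠ i → b j = a j) :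
    (∀ j < i, enc x y b j = enc x y a j) ∧
    (∀ j, i ≤ j → enc x y b j = blkCompl (enc x y a j)) ∧
    ∑ j ∈ Finset.range n, hammingDist (enc x y a j) (enc x y b j) = ℓ * (n - i) := by

  have key : ∀ j, (j < i → enc x y b j = enc x y a j) ∧
      (i ≤ j → enc x y b j = blkCompl (enc x y a j)) := by
    intro j
    induction j with
    | zero =>
      constructor
      · intro hj
        have h0 : b 0 = a 0 := hsame 0 (by omega)
        simp [enc, h0]
      · intro hj
        have h0 : i = 0 := Nat.le_zero.mp hj
        have hb : b 0 = !(a 0) := h0 ▸ hflip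
        by_cases h : a 0 <;> simp [enc, hb, h, blkCompl_invol]
    | succ k ih =>
      constructor
      · intro hj
        have h1 : enc x y b k = enc x y a k := ih.1 (by omega)
        have h2 : b (k + 1) = a (k + 1) := hsame _ (by omega)
        simp [enc, h1, h2]
      · intro hj
        rcases Nat.lt_or_ge k i with hk | hk
        · have h0 : i = k + 1 := by omega
          have h1 : enc x y b k = enc x y a k := ih.1 hk
          have hb : b (k + 1) = !(a (k + 1)) := h0 ▸ hflip
          show fmap x y (enc x y b k) (b (k+1)) = blkCompl (fmap x y (enc x y a k) (a (k+1)))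
          rw [h1, hb]
          exact fmap_not hℓ x y hxy hxyc _ (enc_mem hℓ x y hxy hxyc a k) _
        · have h1 : enc x y b k = blkCompl (enc x y a k) := ih.2 hk
          have h2 : b (k + 1) = a (k + 1) := hsame _ (by omega)
          show fmap x y (enc x y b k) (b (k+1)) = blkCompl (fmap x y (enc x y a k) (a (k+1)))
          rw [h1, h2]
          exact fmap_compl hℓ x y hxy hxyc _ (enc_mem hℓ x y hxy hxyc a k) _
  refine ⟨fun j hj => (key j).1 hj, fun j hj => (key j).2 hj, ?_⟩
  rw [Finset.range_eq_Ico, ← Finset.sum_Ico_consecutive _ (Nat.zero_le i) (le_of_lt hi)]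
  have hA : ∑ j ∈ Finset.Ico 0 i, hammingDist (enc x y a j) (enc x y b j) = 0 := by
    apply Finset.sum_eq_zero
    intro j hj
    rw [(key j).1 (Finset.mem_Ico.mp hj).2, hammingDist_self]
  have hB : ∑ j ∈ Finset.Ico i n, hammingDist (enc x y a j) (enc x y b j) = ℓ * (n - i) := by
    rw [Finset.sum_congr rfl (fun j hj => ?_), Finset.sum_const, Nat.card_Ico, smul_eq_mul,
      Nat.mul_comm]
    rw [(key j).2 (Finset.mem_Ico.mp hj).1]
    exact hamming_compl _
  rw [hA, hB, Nat.zero_add]
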